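/- arXiv:0707.3423 — 5 statements merged into one kernel-verified Lean document; each statement's English description precedes it below -/
import Mathlib

section
/- Let φ ∈ S(n,m) and ζ ∈ ∂B^n. If L = liminf_{z→ζ} (1 - |φ(z)|^2)/(1 - |z|^2) < ∞, then there exists ξ ∈ ∂B^m such that the function h(z) = (1 - ⟨φ(z), ξ⟩)/(1 - ⟨z, ζ⟩) belongs to H(φ), with ‖h‖_{H(φ)}^2 ≤ L. -/
open Metric Filter Topology
open scoped ComplexConjugate ComplexOrder

local notation "⟪" x ", " y "⟫" => @inner ℂ _ _ x y

/-- The Schur–Agler positivity condition for `φ : Bⁿ → Bᵐ`. -/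
def SchurAglerKernelPos {n m : ℕ}
    (φ : EuclideanSpace ℂ (Fin n) → EuclideanSpace ℂ (Fin m)) : Prop :=
  ∀ (N : ℕ) (zs : Fin N → EuclideanSpace ℂ (Fin n)),
    (∀ i, zs i ∈ ball (0 : EuclideanSpace ℂ (Fin n)) 1) →
    ∀ c : Fin N → ℂ,
      0 ≤ ∑ i, ∑ j, c i * conj (c j) *
        ((1 - ⟪φ (zs j), φ (zs i)⟫) / (1 - ⟪zs j, zs i⟫))

/-! Pick `z_k → ζ` in the ball along which the Julia quotient `(1 - ‖φ z‖²)/(1 - ‖z‖²)` tends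
to its liminf `L`, and, by compactness of the closed unit ball of `ℂᵐ`, such that `φ z_k → ξ`;
then `‖φ z_k‖ → 1`, so `‖ξ‖ = 1`. The Julia quotient at `z` is `‖k^φ_z‖²`, so the kernel functions
`k^φ_{z_k}` stay bounded with norms tending to `√L`. By Banach–Alaoglu they have a weak cluster
point `h` with `‖h‖ ≤ √L`, and passing to the limit in `⟨k^φ_{z_k}, k^φ_v⟩ = k^φ(v, z_k)`
identifies `h(v) = (1 - ⟨φ v, ξ⟩)/(1 - ⟨v, ζ⟩)`. -/

theorem MapClusterPt.eq_of_tendsto {X ι : Type*} [TopologicalSpace X] [T2Space X]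
    {l : Filter ι} {u : ι → X} {a b : X} (ha : MapClusterPt a l u) (hb : Tendsto u l (𝓝 b)) :
    a = b :=
  eq_of_nhds_neBot (ha.clusterPt.mono hb)

/-- Banach–Alaoglu in the weak-* dual, transported back by the Riesz isomorphism. -/
theorem exists_norm_le_mapClusterPt_inner {𝕜 E ι : Type*} [RCLike 𝕜] [NormedAddCommGroup E]
    [InnerProductSpace 𝕜 E] [CompleteSpace E] {l : Filter ι} [l.NeBot] {y : ι → E} {r : ℝ}
    (hy : Tendsto (fun i => ‖y i‖) l (𝓝 r)) :
    ∃ h : E, ‖h‖ ≤ r ∧ ∀ u, MapClusterPt (inner 𝕜 h u) l (fun i => inner 𝕜 (y i) u) := by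
  set ℓ : ι → WeakDual 𝕜 E := fun i => StrongDual.toWeakDual (innerSL 𝕜 (y i))
  have hball : ∀ r' > r, ∀ᶠ i in l, ℓ i ∈ WeakDual.toStrongDual ⁻¹' closedBall 0 r' :=
    fun r' hr' => (hy.eventually (ge_mem_nhds hr')).mono fun i hi => by
      simpa [ℓ, innerSL_apply_norm] using hi
  obtain ⟨ℓ₀, -, hℓ₀⟩ := (WeakDual.isCompact_closedBall 0 (r + 1)).exists_mapClusterPt
    (tendsto_principal.2 (hball (r + 1) (lt_add_one r)))
  have hnorm : ‖WeakDual.toStrongDual ℓ₀‖ ≤ r := le_of_forall_gt_imp_ge_of_dense fun r' hr' => by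
    simpa using (WeakDual.isClosed_closedBall 0 r').mem_of_mapClusterPt hℓ₀ (hball r' hr')
  refine ⟨(InnerProductSpace.toDual 𝕜 E).symm (WeakDual.toStrongDual ℓ₀), by simpa using hnorm,
    fun u => ?_⟩
  rw [InnerProductSpace.toDual_symm_apply]
  exact hℓ₀.continuousAt_comp (WeakDual.eval_continuous u).continuousAt

theorem one_sub_inner_ne_zero {𝕜 E : Type*} [RCLike 𝕜] [NormedAddCommGroup E]
    [InnerProductSpace 𝕜 E] {v w : E} (hv : ‖v‖ < 1) (hw : ‖w‖ ≤ 1) :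
    (1 : 𝕜) - inner 𝕜 v w ≠ 0 := by
  intro h
  have : ‖inner 𝕜 v w‖ < 1 := (norm_inner_le_norm v w).trans_lt (by nlinarith [norm_nonneg v])
  rw [← sub_eq_zero.1 h, norm_one] at this
  exact lt_irrefl _ this

noncomputable def juliaQuotient {E F : Type*} [Norm E] [Norm F] (φ : E → F) (z : E) : ℝ :=
  (1 - ‖φ z‖ ^ 2) / (1 - ‖z‖ ^ 2)

section JuliaQuotient

variable {E F : Type*} [NormedAddCommGroup E] [NormedAddCommGroup F] {φ : E → F}

theorem juliaQuotient_nonneg {z : E} (hz : ‖z‖ ≤ 1) (hφz : ‖φ z‖ ≤ 1) :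
    0 ≤ juliaQuotient φ z :=
  div_nonneg (by nlinarith [norm_nonneg (φ z)]) (by nlinarith [norm_nonneg z])

theorem exists_seq_tendsto_liminf_juliaQuotient [NormedSpace ℝ E]
    (hφ : Set.MapsTo φ (ball 0 1) (ball 0 1)) {ζ : E} (hζ : ‖ζ‖ = 1)
    (hfin : ∃ C, ∃ᶠ z in 𝓝[ball 0 1] ζ, juliaQuotient φ z ≤ C) :
    ∃ z : ℕ → E, Tendsto (juliaQuotient φ ∘ z) atTop
      (𝓝 (liminf (juliaQuotient φ) (𝓝[ball 0 1] ζ))) ∧ Tendsto z atTop (𝓝[ball 0 1] ζ) := by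
  have : (𝓝[ball (0 : E) 1] ζ).NeBot := mem_closure_iff_nhdsWithin_neBot.1 <| by
    rw [closure_ball 0 one_ne_zero, mem_closedBall_zero_iff, hζ]
  obtain ⟨C, hC⟩ := hfin
  refine exists_seq_tendsto_liminf (IsCoboundedUnder.of_frequently_le hC)
    (isBoundedUnder_of_eventually_ge (a := 0) ?_)
  filter_upwards [self_mem_nhdsWithin] with z hz
  exact juliaQuotient_nonneg (mem_ball_zero_iff.1 hz).le (mem_ball_zero_iff.1 (hφ hz)).le

theorem norm_eq_one_of_tendsto_juliaQuotient {ι : Type*} {l : Filter ι} [l.NeBot] {z : ι → E}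
    {ζ : E} {ξ : F} {L : ℝ} (hz : Tendsto z l (𝓝[ball 0 1] ζ)) (hζ : ‖ζ‖ = 1)
    (hL : Tendsto (juliaQuotient φ ∘ z) l (𝓝 L)) (hξ : Tendsto (φ ∘ z) l (𝓝 ξ)) : ‖ξ‖ = 1 := by
  have hden : Tendsto (fun i => 1 - ‖z i‖ ^ 2) l (𝓝 0) := by
    simpa [hζ] using ((tendsto_nhds_of_tendsto_nhdsWithin hz).norm.pow 2).const_sub 1
  have hnum : Tendsto (fun i => 1 - ‖φ (z i)‖ ^ 2) l (𝓝 (L * 0)) := by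
    refine (hL.mul hden).congr' ?_
    filter_upwards [hz self_mem_nhdsWithin] with i hi
    have : 1 - ‖z i‖ ^ 2 ≠ 0 := by nlinarith [mem_ball_zero_iff.1 hi, norm_nonneg (z i)]
    exact div_mul_cancel₀ _ this
  have := tendsto_nhds_unique ((hξ.norm.pow 2).const_sub 1) hnum
  rwa [mul_zero, sub_eq_zero, eq_comm, pow_eq_one_iff_of_nonneg (norm_nonneg ξ) two_ne_zero] at this

end JuliaQuotient

section ReproducingKernel

variable {𝕜 E F H : Type*} [RCLike 𝕜] [NormedAddCommGroup E] [InnerProductSpace 𝕜 E]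
  [NormedAddCommGroup F] [InnerProductSpace 𝕜 F] [NormedAddCommGroup H] [InnerProductSpace 𝕜 H]

variable (𝕜) in
/-- `K z` is the kernel function `k^φ_z` of `H(φ)`, so `⟪K z, K w⟫ = k^φ_w(z)`. -/
def IsKernelMap (φ : E → F) (K : E → H) : Prop :=
  ∀ z ∈ ball (0 : E) 1, ∀ w ∈ ball (0 : E) 1,
    inner 𝕜 (K z) (K w) = (1 - inner 𝕜 (φ w) (φ z)) / (1 - inner 𝕜 w z)

variable {φ : E → F} {K : E → H}

theorem IsKernelMap.norm_sq_eq_juliaQuotient (hK : IsKernelMap 𝕜 φ K) {z : E}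
    (hz : z ∈ ball 0 1) : ‖K z‖ ^ 2 = juliaQuotient φ z := by
  apply (RCLike.ofReal_injective (K := 𝕜))
  simpa [juliaQuotient, inner_self_eq_norm_sq_to_K] using hK z hz z hz

theorem IsKernelMap.tendsto_norm (hK : IsKernelMap 𝕜 φ K) {ι : Type*} {l : Filter ι}
    {x : ι → E} {L : ℝ} (hx : ∀ᶠ i in l, x i ∈ ball 0 1)
    (hL : Tendsto (juliaQuotient φ ∘ x) l (𝓝 L)) :
    Tendsto (fun i => ‖K (x i)‖) l (𝓝 (√L)) := by
  refine hL.sqrt.congr' ?_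
  filter_upwards [hx] with i hi
  rw [Function.comp_apply, ← hK.norm_sq_eq_juliaQuotient hi, Real.sqrt_sq (norm_nonneg _)]

theorem IsKernelMap.tendsto_inner (hK : IsKernelMap 𝕜 φ K) {ι : Type*} {l : Filter ι}
    {x : ι → E} {ζ : E} {ξ : F} (hx : Tendsto x l (𝓝[ball 0 1] ζ)) (hζ : ‖ζ‖ = 1)
    (hξ : Tendsto (φ ∘ x) l (𝓝 ξ)) {v : E} (hv : v ∈ ball 0 1) :
    Tendsto (fun i => inner 𝕜 (K (x i)) (K v)) l
      (𝓝 ((1 - inner 𝕜 (φ v) ξ) / (1 - inner 𝕜 v ζ))) := by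
  have hlim : Tendsto (fun i => (1 - inner 𝕜 (φ v) (φ (x i))) / (1 - inner 𝕜 v (x i))) l
      (𝓝 ((1 - inner 𝕜 (φ v) ξ) / (1 - inner 𝕜 v ζ))) :=
    (tendsto_const_nhds.inner hξ).const_sub 1 |>.div
      ((tendsto_const_nhds.inner (tendsto_nhds_of_tendsto_nhdsWithin hx)).const_sub 1)
      (one_sub_inner_ne_zero (mem_ball_zero_iff.1 hv) hζ.le)
  refine hlim.congr' ?_
  filter_upwards [hx self_mem_nhdsWithin] with i hi
  exact (hK _ hi v hv).symm

end ReproducingKernel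

theorem schur_agler_conditionC_gives_h_mem_general
    (n m : ℕ)
    (φ : EuclideanSpace ℂ (Fin n) → EuclideanSpace ℂ (Fin m))
    (hφmap : ∀ z ∈ ball (0 : EuclideanSpace ℂ (Fin n)) 1,
      φ z ∈ ball (0 : EuclideanSpace ℂ (Fin m)) 1)
    (ζ : EuclideanSpace ℂ (Fin n)) (hζ : ‖ζ‖ = 1)
    (Hφ : Type*) [NormedAddCommGroup Hφ] [InnerProductSpace ℂ Hφ] [CompleteSpace Hφ]
    (toFunφ : Hφ →ₗ[ℂ] (EuclideanSpace ℂ (Fin n) → ℂ))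
    (Kφ : EuclideanSpace ℂ (Fin n) → Hφ)
    (hreproφ : ∀ (f : Hφ) (z : EuclideanSpace ℂ (Fin n)),
      z ∈ ball (0 : EuclideanSpace ℂ (Fin n)) 1 → toFunφ f z = ⟪Kφ z, f⟫)
    (hkerφ : ∀ z w : EuclideanSpace ℂ (Fin n),
      z ∈ ball (0 : EuclideanSpace ℂ (Fin n)) 1 →
      w ∈ ball (0 : EuclideanSpace ℂ (Fin n)) 1 →
      toFunφ (Kφ w) z = (1 - ⟪φ w, φ z⟫) / (1 - ⟪w, z⟫))
    (L : ℝ)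
    (hfin : ∃ C : ℝ, ∃ᶠ z in 𝓝[ball (0 : EuclideanSpace ℂ (Fin n)) 1] ζ,
      (1 - ‖φ z‖ ^ 2) / (1 - ‖z‖ ^ 2) ≤ C)
    (hL : Filter.liminf (fun z => (1 - ‖φ z‖ ^ 2) / (1 - ‖z‖ ^ 2))
      (𝓝[ball (0 : EuclideanSpace ℂ (Fin n)) 1] ζ) = L) :
    ∃ ξ : EuclideanSpace ℂ (Fin m), ‖ξ‖ = 1 ∧
      ∃ h : Hφ,
        (∀ z ∈ ball (0 : EuclideanSpace ℂ (Fin n)) 1,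
          toFunφ h z = (1 - ⟪ξ, φ z⟫) / (1 - ⟪ζ, z⟫)) ∧
        ‖h‖ ^ 2 ≤ L := by
  have hK : IsKernelMap ℂ φ Kφ :=
    fun z hz w hw => (hreproφ _ z hz).symm.trans (hkerφ z w hz hw)
  obtain ⟨z, hzL, hzζ⟩ := exists_seq_tendsto_liminf_juliaQuotient hφmap hζ hfin
  have hφzB : ∀ᶠ k in atTop, φ (z k) ∈ closedBall 0 1 :=
    (hzζ.eventually self_mem_nhdsWithin).mono fun k hk => ball_subset_closedBall (hφmap _ hk)
  obtain ⟨ξ, -, ψ, hψ, hξ⟩ := (isCompact_closedBall 0 1).tendsto_subseq' hφzB.frequently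
  have hxζ := hzζ.comp hψ.tendsto_atTop
  have hxB := hxζ.eventually self_mem_nhdsWithin
  have hxL : Tendsto (juliaQuotient φ ∘ z ∘ ψ) atTop (𝓝 L) := hL ▸ hzL.comp hψ.tendsto_atTop
  obtain ⟨h, hh, hlim⟩ := exists_norm_le_mapClusterPt_inner (𝕜 := ℂ) (hK.tendsto_norm hxB hxL)
  have hval : ∀ v ∈ ball 0 1, ⟪h, Kφ v⟫ = (1 - ⟪φ v, ξ⟫) / (1 - ⟪v, ζ⟫) := fun v hv =>
    (hlim (Kφ v)).eq_of_tendsto (hK.tendsto_inner hxζ hζ hξ hv)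
  refine ⟨ξ, norm_eq_one_of_tendsto_juliaQuotient hxζ hζ hxL hξ, h, fun v hv => ?_, ?_⟩
  · rw [hreproφ h v hv, ← inner_conj_symm, hval v hv]
    simp only [map_div₀, map_sub, map_one, inner_conj_symm]
  · have hL0 : 0 ≤ L := ge_of_tendsto hxL <| hxB.mono fun k hk =>
      juliaQuotient_nonneg (mem_ball_zero_iff.1 hk).le (mem_ball_zero_iff.1 (hφmap _ hk)).le
    calc ‖h‖ ^ 2 ≤ √L ^ 2 := by gcongr
      _ = L := Real.sq_sqrt hL0

/-- Let `φ ∈ S(n,m)` and `ζ ∈ ∂Bⁿ`.  If condition (C) holds, i.e.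
`L = liminf_{z→ζ} (1-‖φ(z)‖²)/(1-‖z‖²) < ∞` (finiteness being expressed by the ratio
being frequently bounded near `ζ`), then there exists `ξ ∈ ∂Bᵐ` such that
`h(z) = (1 - ⟨φ(z), ξ⟩)/(1 - ⟨z, ζ⟩)` belongs to `H(φ)`, with `‖h‖²_{H(φ)} ≤ L`. -/
theorem schur_agler_conditionC_gives_h_mem
    (n m : ℕ)
    (φ : EuclideanSpace ℂ (Fin n) → EuclideanSpace ℂ (Fin m))
    (hφmap : ∀ z ∈ ball (0 : EuclideanSpace ℂ (Fin n)) 1,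
      φ z ∈ ball (0 : EuclideanSpace ℂ (Fin m)) 1)
    (hφhol : DifferentiableOn ℂ φ (ball (0 : EuclideanSpace ℂ (Fin n)) 1))
    (hpsd : SchurAglerKernelPos φ)
    (ζ : EuclideanSpace ℂ (Fin n)) (hζ : ‖ζ‖ = 1)
    (Hφ : Type*) [NormedAddCommGroup Hφ] [InnerProductSpace ℂ Hφ] [CompleteSpace Hφ]
    (toFunφ : Hφ →ₗ[ℂ] (EuclideanSpace ℂ (Fin n) → ℂ))
    (hinjφ : Function.Injective toFunφ)
    (Kφ : EuclideanSpace ℂ (Fin n) → Hφ)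
    (hreproφ : ∀ (f : Hφ) (z : EuclideanSpace ℂ (Fin n)),
      z ∈ ball (0 : EuclideanSpace ℂ (Fin n)) 1 → toFunφ f z = ⟪Kφ z, f⟫)
    (hkerφ : ∀ z w : EuclideanSpace ℂ (Fin n),
      z ∈ ball (0 : EuclideanSpace ℂ (Fin n)) 1 →
      w ∈ ball (0 : EuclideanSpace ℂ (Fin n)) 1 →
      toFunφ (Kφ w) z = (1 - ⟪φ w, φ z⟫) / (1 - ⟪w, z⟫))
    (hdense : Dense (Submodule.span ℂ (Kφ '' (ball (0 : EuclideanSpace ℂ (Fin n)) 1)) : Set Hφ))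
    (L : ℝ)
    (hfin : ∃ C : ℝ, ∃ᶠ z in 𝓝[ball (0 : EuclideanSpace ℂ (Fin n)) 1] ζ,
      (1 - ‖φ z‖ ^ 2) / (1 - ‖z‖ ^ 2) ≤ C)
    (hL : Filter.liminf (fun z => (1 - ‖φ z‖ ^ 2) / (1 - ‖z‖ ^ 2))
      (𝓝[ball (0 : EuclideanSpace ℂ (Fin n)) 1] ζ) = L) :
    ∃ ξ : EuclideanSpace ℂ (Fin m), ‖ξ‖ = 1 ∧
      ∃ h : Hφ,
        (∀ z ∈ ball (0 : EuclideanSpace ℂ (Fin n)) 1,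
          toFunφ h z = (1 - ⟪ξ, φ z⟫) / (1 - ⟪ζ, z⟫)) ∧
        ‖h‖ ^ 2 ≤ L :=
  schur_agler_conditionC_gives_h_mem_general n m φ hφmap ζ hζ Hφ toFunφ Kφ hreproφ hkerφ L hfin hL
end

section
/- Let φ ∈ S(n,m), ζ ∈ ∂B^n, ξ ∈ ∂B^m, and suppose h = k^φ_ζ := (1 - ⟨φ(·), ξ⟩)/(1 - ⟨·, ζ⟩) belongs to H(φ). Then the norms ‖k^φ_z‖_{H(φ)} remain bounded as z → ζ within any Koranyi region D_α(ζ), and consequently k^φ_z → k^φ_ζ weakly in H(φ) and every f ∈ H(φ) has a finite K-limit at ζ, namely ⟨f, k^φ_ζ⟩. -/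
/-!
On the diagonal, `‖k_z‖² (1 - ‖z‖²) = 1 - ‖φ z‖² ≤ 2 |1 - ⟨φ z, ξ⟩| = 2 |h z| |1 - ⟨z, ζ⟩|`, and
`|h z| ≤ ‖k_z‖ ‖h‖`. In `D_α(ζ)` the last factor is at most `(α/2)(1 - ‖z‖²)`, so `‖k_z‖ ≤ α ‖h‖`.
The same factorisation gives `⟨φ z, ξ⟩ → 1`, hence `φ z → ξ`, along `D_α(ζ)`; therefore
`⟨k_z, k_w⟩ → ⟨h, k_w⟩` for every `w` in the ball, and since the `k_z` stay bounded and the `k_w`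
span a dense subspace, `⟨k_z, f⟩ → ⟨h, f⟩` for every `f`.
-/

open Metric Filter Topology
open scoped ComplexConjugate ComplexOrder

local notation "⟪" x ", " y "⟫" => @inner ℂ _ _ x y

/-- The Koranyi region `D_α(ζ) = {z ∈ Bⁿ : |1 - ⟨z,ζ⟩| ≤ (α/2)(1-‖z‖²)}`. -/
def Koranyi {n : ℕ} (α : ℝ) (ζ : EuclideanSpace ℂ (Fin n)) :
    Set (EuclideanSpace ℂ (Fin n)) :=
  {z | z ∈ ball (0 : EuclideanSpace ℂ (Fin n)) 1 ∧
    ‖1 - ⟪ζ, z⟫‖ ≤ α / 2 * (1 - ‖z‖ ^ 2)}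

section InnerProduct

variable {𝕜 E : Type*} [RCLike 𝕜] [NormedAddCommGroup E] [InnerProductSpace 𝕜 E]

theorem one_sub_inner_ne_zero_s8 {w z : E} (h : ‖w‖ * ‖z‖ < 1) : (1 : 𝕜) - inner 𝕜 w z ≠ 0 := by
  intro h1
  have := norm_inner_le_norm (𝕜 := 𝕜) w z
  rw [← sub_eq_zero.mp h1, norm_one] at this
  linarith

theorem one_sub_norm_sq_le_two_mul_norm_one_sub_inner {ξ : E} (hξ : ‖ξ‖ ≤ 1) (v : E) :
    1 - ‖v‖ ^ 2 ≤ 2 * ‖(1 : 𝕜) - inner 𝕜 ξ v‖ := by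
  have hinner : ‖inner 𝕜 ξ v‖ ≤ ‖v‖ :=
    (norm_inner_le_norm ξ v).trans (mul_le_of_le_one_left (norm_nonneg v) hξ)
  have := norm_sub_norm_le (1 : 𝕜) (inner 𝕜 ξ v)
  rw [norm_one] at this
  nlinarith [sq_nonneg (1 - ‖v‖)]

theorem norm_sub_sq_le_two_mul_norm_one_sub_inner {ξ v : E} (hξ : ‖ξ‖ ≤ 1) (hv : ‖v‖ ≤ 1) :
    ‖v - ξ‖ ^ 2 ≤ 2 * ‖(1 : 𝕜) - inner 𝕜 ξ v‖ := by
  have hre : RCLike.re (inner 𝕜 v ξ) = RCLike.re (inner 𝕜 ξ v) := by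
    rw [← inner_conj_symm, RCLike.conj_re]
  have := RCLike.re_le_norm ((1 : 𝕜) - inner 𝕜 ξ v)
  rw [map_sub, RCLike.one_re] at this
  rw [@norm_sub_sq 𝕜, hre]
  nlinarith [norm_nonneg v, norm_nonneg ξ]

theorem norm_sq_mul_one_sub_norm_sq_eq {F H : Type*} [NormedAddCommGroup F]
    [InnerProductSpace 𝕜 F] [NormedAddCommGroup H] [InnerProductSpace 𝕜 H]
    {k : H} {z : E} {v : F} (hz : ‖z‖ < 1)
    (hk : inner 𝕜 k k = (1 - inner 𝕜 v v) / (1 - inner 𝕜 z z)) :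
    ‖k‖ ^ 2 * (1 - ‖z‖ ^ 2) = 1 - ‖v‖ ^ 2 := by
  have hz' : (1 : 𝕜) - ‖z‖ ^ 2 ≠ 0 := by
    have : (1 : ℝ) - ‖z‖ ^ 2 ≠ 0 := by nlinarith [norm_nonneg z]
    exact_mod_cast this
  simp only [inner_self_eq_norm_sq_to_K] at hk
  rw [eq_div_iff hz'] at hk
  exact_mod_cast hk

theorem tendsto_inner_of_dense {ι : Type*} {l : Filter ι} {k : ι → E} {x : E} {C : ℝ}
    (hk : ∀ᶠ i in l, ‖k i‖ ≤ C) {S : Set E} (hS : Dense S)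
    (hlim : ∀ s ∈ S, Tendsto (fun i => inner 𝕜 (k i) s) l (𝓝 (inner 𝕜 x s))) (f : E) :
    Tendsto (fun i => inner 𝕜 (k i) f) l (𝓝 (inner 𝕜 x f)) := by
  rw [Metric.tendsto_nhds]
  intro ε hε
  set M := max C 0 + ‖x‖ + 1
  have hM : 0 < M := by positivity
  obtain ⟨s, hs, hfs⟩ := hS.exists_dist_lt f (div_pos (half_pos hε) hM)
  filter_upwards [hk, Metric.tendsto_nhds.mp (hlim s hs) (ε / 2) (half_pos hε)] with i hki hi
  have hsplit : inner 𝕜 (k i) f - inner 𝕜 x f =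
      (inner 𝕜 (k i) s - inner 𝕜 x s) + inner 𝕜 (k i - x) (f - s) := by
    simp only [inner_sub_left, inner_sub_right]; ring
  have hkx : ‖k i - x‖ ≤ M :=
    (norm_sub_le _ _).trans (by linarith [le_max_left C 0])
  rw [dist_eq_norm] at hi hfs ⊢
  calc ‖inner 𝕜 (k i) f - inner 𝕜 x f‖
      ≤ ‖inner 𝕜 (k i) s - inner 𝕜 x s‖ + ‖k i - x‖ * ‖f - s‖ := by
        rw [hsplit]; exact (norm_add_le _ _).trans (by gcongr; exact norm_inner_le_norm _ _)
    _ < ε / 2 + M * (ε / 2 / M) :=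
        add_lt_add_of_lt_of_le hi (mul_le_mul hkx hfs.le (norm_nonneg _) hM.le)
    _ = ε := by field_simp; ring

theorem tendsto_inner_of_dense_span {ι : Type*} {l : Filter ι} {k : ι → E} {x : E} {C : ℝ}
    (hk : ∀ᶠ i in l, ‖k i‖ ≤ C) {S : Set E} (hS : Dense (Submodule.span 𝕜 S : Set E))
    (hlim : ∀ s ∈ S, Tendsto (fun i => inner 𝕜 (k i) s) l (𝓝 (inner 𝕜 x s))) (f : E) :
    Tendsto (fun i => inner 𝕜 (k i) f) l (𝓝 (inner 𝕜 x f)) := by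
  refine tendsto_inner_of_dense hk hS (fun s hs => ?_) f
  induction hs using Submodule.span_induction with
  | mem s hs => exact hlim s hs
  | zero => simpa using tendsto_const_nhds
  | add s t _ _ hs ht => simpa only [inner_add_right] using hs.add ht
  | smul c s _ hs => simpa only [inner_smul_right] using hs.const_mul c

end InnerProduct

section KoranyiLimits

variable {n m : ℕ} {φ : EuclideanSpace ℂ (Fin n) → EuclideanSpace ℂ (Fin m)}
  {ζ : EuclideanSpace ℂ (Fin n)} {ξ : EuclideanSpace ℂ (Fin m)} {α : ℝ}
  {H : Type*} [NormedAddCommGroup H] [InnerProductSpace ℂ H]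
  {K : EuclideanSpace ℂ (Fin n) → H} {h : H}

theorem norm_apply_le_one_of_kernel
    (hK : ∀ z ∈ ball (0 : EuclideanSpace ℂ (Fin n)) 1,
      ∀ w ∈ ball (0 : EuclideanSpace ℂ (Fin n)) 1, ⟪K z, K w⟫ = (1 - ⟪φ w, φ z⟫) / (1 - ⟪w, z⟫))
    {z : EuclideanSpace ℂ (Fin n)} (hz : z ∈ ball (0 : EuclideanSpace ℂ (Fin n)) 1) :
    ‖φ z‖ ≤ 1 := by
  have hz1 : ‖z‖ < 1 := mem_ball_zero_iff.mp hz
  have hdiag := norm_sq_mul_one_sub_norm_sq_eq hz1 (hK z hz z hz)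
  have hpos : 0 ≤ 1 - ‖z‖ ^ 2 := by nlinarith [norm_nonneg z]
  have hdiag_nonneg : 0 ≤ ‖K z‖ ^ 2 * (1 - ‖z‖ ^ 2) := by positivity
  exact (sq_le_one_iff₀ (norm_nonneg _)).mp (by linarith)

theorem one_sub_inner_eq_inner_mul (hζ : ‖ζ‖ ≤ 1)
    (hKh : ∀ z ∈ ball (0 : EuclideanSpace ℂ (Fin n)) 1,
      ⟪K z, h⟫ = (1 - ⟪ξ, φ z⟫) / (1 - ⟪ζ, z⟫))
    {z : EuclideanSpace ℂ (Fin n)} (hz : z ∈ ball (0 : EuclideanSpace ℂ (Fin n)) 1) :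
    1 - ⟪ξ, φ z⟫ = ⟪K z, h⟫ * (1 - ⟪ζ, z⟫) := by
  have hd : (1 : ℂ) - ⟪ζ, z⟫ ≠ 0 := one_sub_inner_ne_zero_s8 <|
    (mul_le_of_le_one_left (norm_nonneg z) hζ).trans_lt (mem_ball_zero_iff.mp hz)
  rw [hKh z hz, div_mul_cancel₀ _ hd]

theorem norm_kernel_le_of_mem_koranyi (hζ : ‖ζ‖ ≤ 1) (hξ : ‖ξ‖ ≤ 1)
    (hK : ∀ z ∈ ball (0 : EuclideanSpace ℂ (Fin n)) 1,
      ∀ w ∈ ball (0 : EuclideanSpace ℂ (Fin n)) 1, ⟪K z, K w⟫ = (1 - ⟪φ w, φ z⟫) / (1 - ⟪w, z⟫))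
    (hKh : ∀ z ∈ ball (0 : EuclideanSpace ℂ (Fin n)) 1,
      ⟪K z, h⟫ = (1 - ⟪ξ, φ z⟫) / (1 - ⟪ζ, z⟫))
    {z : EuclideanSpace ℂ (Fin n)} (hz : z ∈ Koranyi α ζ) :
    ‖K z‖ ≤ α * ‖h‖ := by
  obtain ⟨hzB, hzK⟩ := hz
  have hz1 : ‖z‖ < 1 := mem_ball_zero_iff.mp hzB
  have hpos : 0 < 1 - ‖z‖ ^ 2 := by nlinarith [norm_nonneg z]
  have hα : 0 ≤ α := by nlinarith [norm_nonneg (1 - ⟪ζ, z⟫)]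
  have key : ‖K z‖ ^ 2 * (1 - ‖z‖ ^ 2) ≤ α * ‖h‖ * ‖K z‖ * (1 - ‖z‖ ^ 2) :=
    calc ‖K z‖ ^ 2 * (1 - ‖z‖ ^ 2) = 1 - ‖φ z‖ ^ 2 :=
          norm_sq_mul_one_sub_norm_sq_eq hz1 (hK z hzB z hzB)
      _ ≤ 2 * ‖1 - ⟪ξ, φ z⟫‖ := one_sub_norm_sq_le_two_mul_norm_one_sub_inner hξ _
      _ = 2 * (‖⟪K z, h⟫‖ * ‖1 - ⟪ζ, z⟫‖) := by
          rw [one_sub_inner_eq_inner_mul hζ hKh hzB, norm_mul]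
      _ ≤ 2 * (‖K z‖ * ‖h‖ * (α / 2 * (1 - ‖z‖ ^ 2))) := by
          gcongr; exact norm_inner_le_norm _ _
      _ = α * ‖h‖ * ‖K z‖ * (1 - ‖z‖ ^ 2) := by ring
  have hsq : ‖K z‖ ^ 2 ≤ α * ‖h‖ * ‖K z‖ := le_of_mul_le_mul_right key hpos
  nlinarith [norm_nonneg (K z), mul_nonneg hα (norm_nonneg h)]

theorem tendsto_one_sub_inner_koranyi (hζ : ‖ζ‖ = 1) (hξ : ‖ξ‖ ≤ 1)
    (hK : ∀ z ∈ ball (0 : EuclideanSpace ℂ (Fin n)) 1,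
      ∀ w ∈ ball (0 : EuclideanSpace ℂ (Fin n)) 1, ⟪K z, K w⟫ = (1 - ⟪φ w, φ z⟫) / (1 - ⟪w, z⟫))
    (hKh : ∀ z ∈ ball (0 : EuclideanSpace ℂ (Fin n)) 1,
      ⟪K z, h⟫ = (1 - ⟪ξ, φ z⟫) / (1 - ⟪ζ, z⟫)) :
    Tendsto (fun z => 1 - ⟪ξ, φ z⟫) (𝓝[Koranyi α ζ] ζ) (𝓝 0) := by
  have hζz : Tendsto (fun z => 1 - ⟪ζ, z⟫) (𝓝[Koranyi α ζ] ζ) (𝓝 0) := by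
    have hc : Continuous fun z : EuclideanSpace ℂ (Fin n) => 1 - ⟪ζ, z⟫ := by fun_prop
    simpa [inner_self_eq_norm_sq_to_K, hζ] using (hc.tendsto ζ).mono_left nhdsWithin_le_nhds
  rw [tendsto_zero_iff_norm_tendsto_zero]
  refine squeeze_zero' (Eventually.of_forall fun _ => norm_nonneg _) ?_
    ((hζz.norm.const_mul (α * ‖h‖ * ‖h‖)).trans_eq (by simp))
  filter_upwards [eventually_mem_nhdsWithin] with z hz
  rw [one_sub_inner_eq_inner_mul hζ.le hKh hz.1, norm_mul]
  gcongr
  calc ‖⟪K z, h⟫‖ ≤ ‖K z‖ * ‖h‖ := norm_inner_le_norm _ _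
    _ ≤ α * ‖h‖ * ‖h‖ := by gcongr; exact norm_kernel_le_of_mem_koranyi hζ.le hξ hK hKh hz

theorem tendsto_koranyi (hζ : ‖ζ‖ = 1) (hξ : ‖ξ‖ ≤ 1)
    (hK : ∀ z ∈ ball (0 : EuclideanSpace ℂ (Fin n)) 1,
      ∀ w ∈ ball (0 : EuclideanSpace ℂ (Fin n)) 1, ⟪K z, K w⟫ = (1 - ⟪φ w, φ z⟫) / (1 - ⟪w, z⟫))
    (hKh : ∀ z ∈ ball (0 : EuclideanSpace ℂ (Fin n)) 1,
      ⟪K z, h⟫ = (1 - ⟪ξ, φ z⟫) / (1 - ⟪ζ, z⟫)) :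
    Tendsto φ (𝓝[Koranyi α ζ] ζ) (𝓝 ξ) := by
  rw [tendsto_iff_norm_sub_tendsto_zero]
  refine squeeze_zero' (Eventually.of_forall fun _ => norm_nonneg _) ?_
    ((((tendsto_one_sub_inner_koranyi hζ hξ hK hKh).norm.const_mul 2).sqrt).trans_eq (by simp))
  filter_upwards [eventually_mem_nhdsWithin] with z hz
  exact Real.le_sqrt_of_sq_le <|
    norm_sub_sq_le_two_mul_norm_one_sub_inner hξ (norm_apply_le_one_of_kernel hK hz.1)

theorem tendsto_inner_kernel_koranyi (hζ : ‖ζ‖ = 1) (hξ : ‖ξ‖ ≤ 1)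
    (hK : ∀ z ∈ ball (0 : EuclideanSpace ℂ (Fin n)) 1,
      ∀ w ∈ ball (0 : EuclideanSpace ℂ (Fin n)) 1, ⟪K z, K w⟫ = (1 - ⟪φ w, φ z⟫) / (1 - ⟪w, z⟫))
    (hKh : ∀ z ∈ ball (0 : EuclideanSpace ℂ (Fin n)) 1,
      ⟪K z, h⟫ = (1 - ⟪ξ, φ z⟫) / (1 - ⟪ζ, z⟫))
    (hdense : Dense (Submodule.span ℂ (K '' ball (0 : EuclideanSpace ℂ (Fin n)) 1) : Set H))
    (f : H) :
    Tendsto (fun z => ⟪K z, f⟫) (𝓝[Koranyi α ζ] ζ) (𝓝 ⟪h, f⟫) := by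
  have hbdd : ∀ᶠ z in 𝓝[Koranyi α ζ] ζ, ‖K z‖ ≤ α * ‖h‖ :=
    eventually_nhdsWithin_of_forall fun z hz => norm_kernel_le_of_mem_koranyi hζ.le hξ hK hKh hz
  refine tendsto_inner_of_dense_span hbdd hdense ?_ f
  rintro _ ⟨w, hw, rfl⟩
  have hval : ⟪h, K w⟫ = (1 - ⟪φ w, ξ⟫) / (1 - ⟪w, ζ⟫) := by
    rw [← inner_conj_symm, hKh w hw, map_div₀, map_sub, map_sub, map_one, inner_conj_symm,
      inner_conj_symm]
  have hw1 : ‖w‖ * ‖ζ‖ < 1 := by rw [hζ, mul_one]; exact mem_ball_zero_iff.mp hw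
  have hlim : Tendsto (fun z => (1 - ⟪φ w, φ z⟫) / (1 - ⟪w, z⟫)) (𝓝[Koranyi α ζ] ζ)
      (𝓝 ((1 - ⟪φ w, ξ⟫) / (1 - ⟪w, ζ⟫))) :=
    (tendsto_const_nhds.sub (((continuous_const.inner continuous_id).tendsto ξ).comp
      (tendsto_koranyi hζ hξ hK hKh))).div
      (tendsto_const_nhds.sub (((continuous_const.inner continuous_id).tendsto ζ).mono_left
        nhdsWithin_le_nhds)) (one_sub_inner_ne_zero_s8 hw1)
  rw [hval]
  refine hlim.congr' ?_
  filter_upwards [eventually_mem_nhdsWithin] with z hz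
  exact (hK z hz.1 w hw).symm

end KoranyiLimits

theorem schur_agler_kernel_norms_bounded_and_K_limits_general
    (n m : ℕ)
    (φ : EuclideanSpace ℂ (Fin n) → EuclideanSpace ℂ (Fin m))
    (ζ : EuclideanSpace ℂ (Fin n)) (hζ : ‖ζ‖ = 1)
    (ξ : EuclideanSpace ℂ (Fin m)) (hξ : ‖ξ‖ = 1)
    (Hφ : Type*) [NormedAddCommGroup Hφ] [InnerProductSpace ℂ Hφ]
    (toFunφ : Hφ →ₗ[ℂ] (EuclideanSpace ℂ (Fin n) → ℂ))
    (Kφ : EuclideanSpace ℂ (Fin n) → Hφ)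
    (hreproφ : ∀ (f : Hφ) (z : EuclideanSpace ℂ (Fin n)),
      z ∈ ball (0 : EuclideanSpace ℂ (Fin n)) 1 → toFunφ f z = ⟪Kφ z, f⟫)
    (hkerφ : ∀ z w : EuclideanSpace ℂ (Fin n),
      z ∈ ball (0 : EuclideanSpace ℂ (Fin n)) 1 →
      w ∈ ball (0 : EuclideanSpace ℂ (Fin n)) 1 →
      toFunφ (Kφ w) z = (1 - ⟪φ w, φ z⟫) / (1 - ⟪w, z⟫))
    (hdense : Dense (Submodule.span ℂ (Kφ '' (ball (0 : EuclideanSpace ℂ (Fin n)) 1)) : Set Hφ))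
    (h : Hφ)
    (hh : ∀ z ∈ ball (0 : EuclideanSpace ℂ (Fin n)) 1,
      toFunφ h z = (1 - ⟪ξ, φ z⟫) / (1 - ⟪ζ, z⟫)) :
    (∀ α > (0 : ℝ), ∃ C : ℝ, ∃ δ > (0 : ℝ), ∀ z ∈ Koranyi α ζ, ‖z - ζ‖ < δ → ‖Kφ z‖ ≤ C) ∧
    (∀ f : Hφ, ∀ α > (0 : ℝ),
      Tendsto (fun z => toFunφ f z) (𝓝[Koranyi α ζ] ζ) (𝓝 ⟪h, f⟫)) := by
  have hK : ∀ z ∈ ball (0 : EuclideanSpace ℂ (Fin n)) 1,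
      ∀ w ∈ ball (0 : EuclideanSpace ℂ (Fin n)) 1,
      ⟪Kφ z, Kφ w⟫ = (1 - ⟪φ w, φ z⟫) / (1 - ⟪w, z⟫) := fun z hz w hw => by
    rw [← hreproφ _ z hz, hkerφ z w hz hw]
  have hKh : ∀ z ∈ ball (0 : EuclideanSpace ℂ (Fin n)) 1,
      ⟪Kφ z, h⟫ = (1 - ⟪ξ, φ z⟫) / (1 - ⟪ζ, z⟫) := fun z hz => by
    rw [← hreproφ h z hz, hh z hz]
  refine ⟨fun α _ => ⟨α * ‖h‖, 1, one_pos, fun z hz _ =>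
    norm_kernel_le_of_mem_koranyi hζ.le hξ.le hK hKh hz⟩, fun f α _ => ?_⟩
  refine (tendsto_inner_kernel_koranyi hζ hξ.le hK hKh hdense f).congr' ?_
  filter_upwards [eventually_mem_nhdsWithin] with z hz
  exact (hreproφ f z hz.1).symm

/-- Let `φ ∈ S(n,m)`, `ζ ∈ ∂Bⁿ`, `ξ ∈ ∂Bᵐ`, and suppose
`k^φ_ζ = (1 - ⟨φ(·), ξ⟩)/(1 - ⟨·, ζ⟩)` belongs to `H(φ)`.  Then the norms `‖k^φ_z‖`
remain bounded as `z → ζ` within any Koranyi region `D_α(ζ)`, and consequently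
`k^φ_z → k^φ_ζ` weakly: every `f ∈ H(φ)` has finite K-limit `⟨f, k^φ_ζ⟩` at `ζ`
(i.e. `f(z) = ⟨f, k^φ_z⟩ → ⟨f, k^φ_ζ⟩` within each Koranyi region). -/
theorem schur_agler_kernel_norms_bounded_and_K_limits
    (n m : ℕ)
    (φ : EuclideanSpace ℂ (Fin n) → EuclideanSpace ℂ (Fin m))
    (hφmap : ∀ z ∈ ball (0 : EuclideanSpace ℂ (Fin n)) 1,
      φ z ∈ ball (0 : EuclideanSpace ℂ (Fin m)) 1)
    (hφhol : DifferentiableOn ℂ φ (ball (0 : EuclideanSpace ℂ (Fin n)) 1))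
    (hpsd : SchurAglerKernelPos φ)
    (ζ : EuclideanSpace ℂ (Fin n)) (hζ : ‖ζ‖ = 1)
    (ξ : EuclideanSpace ℂ (Fin m)) (hξ : ‖ξ‖ = 1)
    (Hφ : Type*) [NormedAddCommGroup Hφ] [InnerProductSpace ℂ Hφ] [CompleteSpace Hφ]
    (toFunφ : Hφ →ₗ[ℂ] (EuclideanSpace ℂ (Fin n) → ℂ))
    (hinjφ : Function.Injective toFunφ)
    (Kφ : EuclideanSpace ℂ (Fin n) → Hφ)
    (hreproφ : ∀ (f : Hφ) (z : EuclideanSpace ℂ (Fin n)),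
      z ∈ ball (0 : EuclideanSpace ℂ (Fin n)) 1 → toFunφ f z = ⟪Kφ z, f⟫)
    (hkerφ : ∀ z w : EuclideanSpace ℂ (Fin n),
      z ∈ ball (0 : EuclideanSpace ℂ (Fin n)) 1 →
      w ∈ ball (0 : EuclideanSpace ℂ (Fin n)) 1 →
      toFunφ (Kφ w) z = (1 - ⟪φ w, φ z⟫) / (1 - ⟪w, z⟫))
    (hdense : Dense (Submodule.span ℂ (Kφ '' (ball (0 : EuclideanSpace ℂ (Fin n)) 1)) : Set Hφ))
    (h : Hφ)
    (hh : ∀ z ∈ ball (0 : EuclideanSpace ℂ (Fin n)) 1,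
      toFunφ h z = (1 - ⟪ξ, φ z⟫) / (1 - ⟪ζ, z⟫)) :
    (∀ α > (0 : ℝ), ∃ C : ℝ, ∃ δ > (0 : ℝ), ∀ z ∈ Koranyi α ζ, ‖z - ζ‖ < δ → ‖Kφ z‖ ≤ C) ∧
    (∀ f : Hφ, ∀ α > (0 : ℝ),
      Tendsto (fun z => toFunφ f z) (𝓝[Koranyi α ζ] ζ) (𝓝 ⟪h, f⟫)) :=
  schur_agler_kernel_norms_bounded_and_K_limits_general n m φ ζ hζ ξ hξ Hφ toFunφ Kφ hreproφ hkerφ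
    hdense h hh
end

section
/- Julia-type inequality for the Schur-Agler class: if φ ∈ S(n,m), ζ ∈ ∂B^n, ξ ∈ ∂B^m, and h(z) = (1-⟨φ(z),ξ⟩)/(1-⟨z,ζ⟩) belongs to H(φ) with ‖h‖^2 = L, then for all z ∈ B^n: |1 - ⟨φ(z),ξ⟩|^2 / (1 - |φ(z)|^2) ≤ L · |1 - ⟨z,ζ⟩|^2 / (1 - |z|^2). -/
open Metric Filter Topology
open scoped ComplexConjugate ComplexOrder

local notation "⟪" x ", " y "⟫" => @inner ℂ _ _ x y

/-!
Evaluation at `z` is the inner product with the kernel function `k_z`, so Cauchy–Schwarz gives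
`|h(z)|² ≤ ‖h‖² ‖k_z‖² = L (1 - ‖φ(z)‖²) / (1 - ‖z‖²)`; substituting
`h(z) = (1 - ⟨φ(z), ξ⟩) / (1 - ⟨z, ζ⟩)` and clearing denominators is the inequality.
-/

section

variable {E H : Type*} [NormedAddCommGroup E] [InnerProductSpace ℂ E]
  [NormedAddCommGroup H] [InnerProductSpace ℂ H]

lemma one_sub_inner_ne_zero_s10 {u v : E} (hu : ‖u‖ ≤ 1) (hv : ‖v‖ < 1) : 1 - ⟪u, v⟫ ≠ 0 := by
  intro h
  have h_one : ‖⟪u, v⟫‖ = 1 := by rw [← sub_eq_zero.mp h, norm_one]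
  have := (norm_inner_le_norm (𝕜 := ℂ) u v).trans (mul_le_of_le_one_left (norm_nonneg v) hu)
  linarith

lemma norm_sq_eq_of_inner_self_eq {F : Type*} [NormedAddCommGroup F] [InnerProductSpace ℂ F]
    {x : H} {u : E} {v : F} (h : ⟪x, x⟫ = (1 - ⟪v, v⟫) / (1 - ⟪u, u⟫)) :
    ‖x‖ ^ 2 = (1 - ‖v‖ ^ 2) / (1 - ‖u‖ ^ 2) := by
  simp only [inner_self_eq_norm_sq_to_K, RCLike.ofReal_eq_complex_ofReal] at h
  exact_mod_cast h

lemma norm_sq_div_le_of_inner_eq_div {k f : H} {a b : ℂ} {P Q : ℝ} (hP : 0 < P) (hb : b ≠ 0)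
    (hk : ‖k‖ ^ 2 = P / Q) (hkf : ⟪k, f⟫ = a / b) :
    ‖a‖ ^ 2 / P ≤ ‖f‖ ^ 2 * (‖b‖ ^ 2 / Q) := by
  have hab : ‖a‖ ≤ ‖k‖ * ‖f‖ * ‖b‖ := by
    rw [← div_mul_cancel₀ a hb, ← hkf, norm_mul]
    gcongr
    exact norm_inner_le_norm k f
  rw [div_le_iff₀ hP]
  calc ‖a‖ ^ 2 ≤ (‖k‖ * ‖f‖ * ‖b‖) ^ 2 := by gcongr
    _ = ‖f‖ ^ 2 * (‖b‖ ^ 2 / Q) * P := by rw [mul_pow, mul_pow, hk]; ring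

end

theorem schur_agler_julia_inequality_general
    (n m : ℕ)
    (φ : EuclideanSpace ℂ (Fin n) → EuclideanSpace ℂ (Fin m))
    (hφmap : ∀ z ∈ ball (0 : EuclideanSpace ℂ (Fin n)) 1,
      φ z ∈ ball (0 : EuclideanSpace ℂ (Fin m)) 1)
    (ζ : EuclideanSpace ℂ (Fin n)) (hζ : ‖ζ‖ = 1)
    (ξ : EuclideanSpace ℂ (Fin m))
    (Hφ : Type*) [NormedAddCommGroup Hφ] [InnerProductSpace ℂ Hφ]
    (toFunφ : Hφ →ₗ[ℂ] (EuclideanSpace ℂ (Fin n) → ℂ))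
    (Kφ : EuclideanSpace ℂ (Fin n) → Hφ)
    (hreproφ : ∀ (f : Hφ) (z : EuclideanSpace ℂ (Fin n)),
      z ∈ ball (0 : EuclideanSpace ℂ (Fin n)) 1 → toFunφ f z = ⟪Kφ z, f⟫)
    (hkerφ : ∀ z w : EuclideanSpace ℂ (Fin n),
      z ∈ ball (0 : EuclideanSpace ℂ (Fin n)) 1 →
      w ∈ ball (0 : EuclideanSpace ℂ (Fin n)) 1 →
      toFunφ (Kφ w) z = (1 - ⟪φ w, φ z⟫) / (1 - ⟪w, z⟫))
    (h : Hφ)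
    (hh : ∀ z ∈ ball (0 : EuclideanSpace ℂ (Fin n)) 1,
      toFunφ h z = (1 - ⟪ξ, φ z⟫) / (1 - ⟪ζ, z⟫))
    (L : ℝ) (hL : ‖h‖ ^ 2 = L) :
    ∀ z ∈ ball (0 : EuclideanSpace ℂ (Fin n)) 1,
      ‖1 - ⟪ξ, φ z⟫‖ ^ 2 / (1 - ‖φ z‖ ^ 2) ≤
        L * (‖1 - ⟪ζ, z⟫‖ ^ 2 / (1 - ‖z‖ ^ 2)) := by
  intro z hz
  have hφz : ‖φ z‖ < 1 := mem_ball_zero_iff.mp (hφmap z hz)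
  have hP : 0 < 1 - ‖φ z‖ ^ 2 := by nlinarith [norm_nonneg (φ z)]
  have hK : ‖Kφ z‖ ^ 2 = (1 - ‖φ z‖ ^ 2) / (1 - ‖z‖ ^ 2) :=
    norm_sq_eq_of_inner_self_eq (by rw [← hreproφ _ z hz, hkerφ z z hz hz])
  rw [← hL]
  exact norm_sq_div_le_of_inner_eq_div hP
    (one_sub_inner_ne_zero_s10 hζ.le (mem_ball_zero_iff.mp hz)) hK
    (by rw [← hreproφ h z hz, hh z hz])

/-- Julia-type inequality for the Schur–Agler class: if `φ ∈ S(n,m)`,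
`ζ ∈ ∂Bⁿ`, `ξ ∈ ∂Bᵐ`, and `h(z) = (1-⟨φ(z),ξ⟩)/(1-⟨z,ζ⟩)` belongs to `H(φ)` with
`‖h‖² = L`, then for all `z ∈ Bⁿ`:
`|1 - ⟨φ(z),ξ⟩|² / (1 - ‖φ(z)‖²) ≤ L · |1 - ⟨z,ζ⟩|² / (1 - ‖z‖²)`. -/
theorem schur_agler_julia_inequality
    (n m : ℕ)
    (φ : EuclideanSpace ℂ (Fin n) → EuclideanSpace ℂ (Fin m))
    (hφmap : ∀ z ∈ ball (0 : EuclideanSpace ℂ (Fin n)) 1,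
      φ z ∈ ball (0 : EuclideanSpace ℂ (Fin m)) 1)
    (hφhol : DifferentiableOn ℂ φ (ball (0 : EuclideanSpace ℂ (Fin n)) 1))
    (hpsd : SchurAglerKernelPos φ)
    (ζ : EuclideanSpace ℂ (Fin n)) (hζ : ‖ζ‖ = 1)
    (ξ : EuclideanSpace ℂ (Fin m)) (hξ : ‖ξ‖ = 1)
    (Hφ : Type*) [NormedAddCommGroup Hφ] [InnerProductSpace ℂ Hφ] [CompleteSpace Hφ]
    (toFunφ : Hφ →ₗ[ℂ] (EuclideanSpace ℂ (Fin n) → ℂ))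
    (hinjφ : Function.Injective toFunφ)
    (Kφ : EuclideanSpace ℂ (Fin n) → Hφ)
    (hreproφ : ∀ (f : Hφ) (z : EuclideanSpace ℂ (Fin n)),
      z ∈ ball (0 : EuclideanSpace ℂ (Fin n)) 1 → toFunφ f z = ⟪Kφ z, f⟫)
    (hkerφ : ∀ z w : EuclideanSpace ℂ (Fin n),
      z ∈ ball (0 : EuclideanSpace ℂ (Fin n)) 1 →
      w ∈ ball (0 : EuclideanSpace ℂ (Fin n)) 1 →
      toFunφ (Kφ w) z = (1 - ⟪φ w, φ z⟫) / (1 - ⟪w, z⟫))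
    (h : Hφ)
    (hh : ∀ z ∈ ball (0 : EuclideanSpace ℂ (Fin n)) 1,
      toFunφ h z = (1 - ⟪ξ, φ z⟫) / (1 - ⟪ζ, z⟫))
    (L : ℝ) (hL : ‖h‖ ^ 2 = L) :
    ∀ z ∈ ball (0 : EuclideanSpace ℂ (Fin n)) 1,
      ‖1 - ⟪ξ, φ z⟫‖ ^ 2 / (1 - ‖φ z‖ ^ 2) ≤
        L * (‖1 - ⟪ζ, z⟫‖ ^ 2 / (1 - ‖z‖ ^ 2)) :=
  schur_agler_julia_inequality_general n m φ hφmap ζ hζ ξ Hφ toFunφ Kφ hreproφ hkerφ h hh L hL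
end

section
/- For a holomorphic map φ: B^n → B^m in the Schur-Agler class, if every f ∈ H(φ) has a finite K-limit at ζ ∈ ∂B^n, then condition (C) holds: liminf_{z→ζ}(1-|φ(z)|^2)/(1-|z|^2) < ∞. -/
/-!
Every `f ∈ H(φ)` satisfies `f(z) = ⟨k^φ_z, f⟩`, and a radius `r ζ → ζ` stays in the Koranyi
region `D_2(ζ)`. So if every `f` has a K-limit at `ζ`, the kernel functions along the radius form a
weakly convergent sequence, which the uniform boundedness principle makes norm-bounded. As
`‖k^φ_z‖² = (1 - ‖φ z‖²)/(1 - ‖z‖²)`, the ratio of condition (C) stays bounded along the radius.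
-/

open Metric Filter Topology
open scoped ComplexConjugate ComplexOrder

local notation "⟪" x ", " y "⟫" => @inner ℂ _ _ x y

open Set

lemma exists_norm_le_of_forall_tendsto_inner {H : Type*} [NormedAddCommGroup H]
    [InnerProductSpace ℂ H] [CompleteSpace H] {v : ℕ → H}
    (hv : ∀ f : H, ∃ L : ℂ, Tendsto (fun k => ⟪v k, f⟫) atTop (𝓝 L)) :
    ∃ C : ℝ, ∀ k, ‖v k‖ ≤ C := by
  have hbdd : ∀ f : H, ∃ C : ℝ, ∀ k, ‖innerSL ℂ (v k) f‖ ≤ C := fun f => by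
    obtain ⟨L, hL⟩ := hv f
    obtain ⟨C, hC⟩ := hL.norm.bddAbove_range
    exact ⟨C, fun k => hC ⟨k, rfl⟩⟩
  obtain ⟨C, hC⟩ := banach_steinhaus hbdd
  exact ⟨C, fun k => by simpa only [innerSL_apply_norm] using hC k⟩

lemma norm_sq_eq_div_of_inner_self_eq {H E F : Type*} [NormedAddCommGroup H]
    [InnerProductSpace ℂ H] [NormedAddCommGroup E] [InnerProductSpace ℂ E]
    [NormedAddCommGroup F] [InnerProductSpace ℂ F] {k : H} {a : E} {z : F}
    (h : ⟪k, k⟫ = (1 - ⟪a, a⟫) / (1 - ⟪z, z⟫)) :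
    ‖k‖ ^ 2 = (1 - ‖a‖ ^ 2) / (1 - ‖z‖ ^ 2) := by
  simp only [inner_self_eq_norm_sq_to_K] at h
  apply Complex.ofReal_injective
  push_cast
  exact h

lemma koranyi_subset_ball {n : ℕ} (α : ℝ) (ζ : EuclideanSpace ℂ (Fin n)) :
    Koranyi α ζ ⊆ ball 0 1 :=
  fun _ hz => hz.1

section Radial

variable {n : ℕ} {ζ : EuclideanSpace ℂ (Fin n)}

lemma ofReal_smul_mem_koranyi_two (hζ : ‖ζ‖ = 1) {r : ℝ} (hr : r ∈ Ioo 0 1) :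
    (r : ℂ) • ζ ∈ Koranyi 2 ζ := by
  obtain ⟨hr0, hr1⟩ := hr
  have hnorm : ‖(r : ℂ) • ζ‖ = r := by
    rw [norm_smul, Complex.norm_real, Real.norm_of_nonneg hr0.le, hζ, mul_one]
  have hinner : ⟪ζ, (r : ℂ) • ζ⟫ = r := by
    rw [inner_smul_right, inner_self_eq_norm_sq_to_K, hζ]
    simp
  refine ⟨by rwa [mem_ball_zero_iff, hnorm], ?_⟩
  rw [hinner, hnorm, ← Complex.ofReal_one, ← Complex.ofReal_sub, Complex.norm_real,
    Real.norm_of_nonneg (by linarith)]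
  nlinarith

lemma tendsto_ofReal_smul_nhdsWithin_koranyi_two (hζ : ‖ζ‖ = 1) :
    Tendsto (fun r : ℝ => (r : ℂ) • ζ) (𝓝[<] 1) (𝓝[Koranyi 2 ζ] ζ) := by
  refine tendsto_nhdsWithin_of_tendsto_nhds_of_eventually_within _ ?_ ?_
  · have hcont : Continuous fun r : ℝ => (r : ℂ) • ζ := by fun_prop
    simpa using hcont.continuousWithinAt.tendsto (x := 1) (s := Iio 1)
  · filter_upwards [Ioo_mem_nhdsLT zero_lt_one] with r hr
    exact ofReal_smul_mem_koranyi_two hζ hr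

end Radial

theorem schur_agler_K_limits_imply_conditionC_general
    (n m : ℕ)
    (φ : EuclideanSpace ℂ (Fin n) → EuclideanSpace ℂ (Fin m))
    (ζ : EuclideanSpace ℂ (Fin n)) (hζ : ‖ζ‖ = 1)
    (Hφ : Type*) [NormedAddCommGroup Hφ] [InnerProductSpace ℂ Hφ] [CompleteSpace Hφ]
    (toFunφ : Hφ →ₗ[ℂ] (EuclideanSpace ℂ (Fin n) → ℂ))
    (Kφ : EuclideanSpace ℂ (Fin n) → Hφ)
    (hreproφ : ∀ (f : Hφ) (z : EuclideanSpace ℂ (Fin n)),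
      z ∈ ball (0 : EuclideanSpace ℂ (Fin n)) 1 → toFunφ f z = ⟪Kφ z, f⟫)
    (hkerφ : ∀ z w : EuclideanSpace ℂ (Fin n),
      z ∈ ball (0 : EuclideanSpace ℂ (Fin n)) 1 →
      w ∈ ball (0 : EuclideanSpace ℂ (Fin n)) 1 →
      toFunφ (Kφ w) z = (1 - ⟪φ w, φ z⟫) / (1 - ⟪w, z⟫))
    (hKlims : ∀ f : Hφ, ∃ Lf : ℂ, ∀ α > (0 : ℝ),
      Tendsto (fun z => toFunφ f z) (𝓝[Koranyi α ζ] ζ) (𝓝 Lf)) :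
    ∃ C : ℝ, ∃ᶠ z in 𝓝[ball (0 : EuclideanSpace ℂ (Fin n)) 1] ζ,
      (1 - ‖φ z‖ ^ 2) / (1 - ‖z‖ ^ 2) ≤ C := by
  obtain ⟨r, hr⟩ := exists_seq_tendsto (𝓝[<] (1 : ℝ))
  set z : ℕ → EuclideanSpace ℂ (Fin n) := fun k => (r k : ℂ) • ζ
  have hzK : Tendsto z atTop (𝓝[Koranyi 2 ζ] ζ) :=
    (tendsto_ofReal_smul_nhdsWithin_koranyi_two hζ).comp hr
  have hz_ball : ∀ᶠ k in atTop, z k ∈ ball 0 1 :=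
    (hzK.eventually self_mem_nhdsWithin).mono fun k hk => koranyi_subset_ball 2 ζ hk
  obtain ⟨C, hC⟩ : ∃ C : ℝ, ∀ k, ‖Kφ (z k)‖ ≤ C := by
    refine exists_norm_le_of_forall_tendsto_inner fun f => ?_
    obtain ⟨L, hL⟩ := hKlims f
    refine ⟨L, ((hL 2 two_pos).comp hzK).congr' ?_⟩
    filter_upwards [hz_ball] with k hk using hreproφ f (z k) hk
  refine ⟨C ^ 2, (hzK.mono_right (nhdsWithin_mono ζ (koranyi_subset_ball 2 ζ))).frequently
    (Eventually.frequently ?_)⟩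
  filter_upwards [hz_ball] with k hk
  have hkernel : ⟪Kφ (z k), Kφ (z k)⟫ = (1 - ⟪φ (z k), φ (z k)⟫) / (1 - ⟪z k, z k⟫) :=
    hreproφ _ _ hk ▸ hkerφ _ _ hk hk
  rw [← norm_sq_eq_div_of_inner_self_eq hkernel]
  exact pow_le_pow_left₀ (norm_nonneg _) (hC k) 2

/-- For a holomorphic Schur–Agler map `φ : Bⁿ → Bᵐ`, if every
`f ∈ H(φ)` has a finite K-limit at `ζ ∈ ∂Bⁿ`, then condition (C) holds:
`liminf_{z→ζ}(1-‖φ(z)‖²)/(1-‖z‖²) < ∞` (i.e. the ratio is frequently bounded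
near `ζ` within the ball). -/
theorem schur_agler_K_limits_imply_conditionC
    (n m : ℕ)
    (φ : EuclideanSpace ℂ (Fin n) → EuclideanSpace ℂ (Fin m))
    (hφmap : ∀ z ∈ ball (0 : EuclideanSpace ℂ (Fin n)) 1,
      φ z ∈ ball (0 : EuclideanSpace ℂ (Fin m)) 1)
    (hφhol : DifferentiableOn ℂ φ (ball (0 : EuclideanSpace ℂ (Fin n)) 1))
    (hpsd : SchurAglerKernelPos φ)
    (ζ : EuclideanSpace ℂ (Fin n)) (hζ : ‖ζ‖ = 1)
    (Hφ : Type*) [NormedAddCommGroup Hφ] [InnerProductSpace ℂ Hφ] [CompleteSpace Hφ]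
    (toFunφ : Hφ →ₗ[ℂ] (EuclideanSpace ℂ (Fin n) → ℂ))
    (hinjφ : Function.Injective toFunφ)
    (Kφ : EuclideanSpace ℂ (Fin n) → Hφ)
    (hreproφ : ∀ (f : Hφ) (z : EuclideanSpace ℂ (Fin n)),
      z ∈ ball (0 : EuclideanSpace ℂ (Fin n)) 1 → toFunφ f z = ⟪Kφ z, f⟫)
    (hkerφ : ∀ z w : EuclideanSpace ℂ (Fin n),
      z ∈ ball (0 : EuclideanSpace ℂ (Fin n)) 1 →
      w ∈ ball (0 : EuclideanSpace ℂ (Fin n)) 1 →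
      toFunφ (Kφ w) z = (1 - ⟪φ w, φ z⟫) / (1 - ⟪w, z⟫))
    (hdense : Dense (Submodule.span ℂ (Kφ '' (ball (0 : EuclideanSpace ℂ (Fin n)) 1)) : Set Hφ))
    (hKlims : ∀ f : Hφ, ∃ Lf : ℂ, ∀ α > (0 : ℝ),
      Tendsto (fun z => toFunφ f z) (𝓝[Koranyi α ζ] ζ) (𝓝 Lf)) :
    ∃ C : ℝ, ∃ᶠ z in 𝓝[ball (0 : EuclideanSpace ℂ (Fin n)) 1] ζ,
      (1 - ‖φ z‖ ^ 2) / (1 - ‖z‖ ^ 2) ≤ C :=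
  schur_agler_K_limits_imply_conditionC_general n m φ ζ hζ Hφ toFunφ Kφ hreproφ hkerφ hKlims
end

section
/- Let φ(z) = z_1 as a map B^n → 𝔻 (n ≥ 2). Then φ belongs to the Schur-Agler class S(n,1), satisfies condition (C) at e_1 with L = 1, but the function (1-|φ(z)|^2)/(1-|z|^2) = (1-|z_1|^2)/(1-|z|^2) does not have a K-limit at e_1: there exist sequences in a Koranyi region D_α(e_1) converging to e_1 along which it converges to different limits. -/
open Metric Filter Topology
open scoped ComplexConjugate ComplexOrder

local notation "⟪" x ", " y "⟫" => @inner ℂ _ _ x y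

/-!
For `‖z‖, ‖w‖ < 1`, `(1 - z₁ w̄₁) / (1 - ⟨z, w⟩) = 1 + ∑ₘ ⟨z', w'⟩ ⟨z, w⟩ᵐ`, where `z'` is
`z` with its first coordinate removed; each summand is a Schur product of Gram kernels, so the
kernel is positive. Since `|z₁| ≤ ‖z‖`, the quotient `(1 - |z₁|²) / (1 - ‖z‖²)` is at least `1`,
with equality along the radius `r e₁`. Along `r e₁ + √((1 - r²) / 2) e₂`, which stays in the
Koranyi region `D₄(e₁)`, the quotient is identically `2`.
-/

namespace Matrix

variable {ι 𝕜 : Type*} [Fintype ι] [RCLike 𝕜]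

theorem PosSemidef.of_hasSum {β : Type*} {A : β → Matrix ι ι 𝕜} {S : Matrix ι ι 𝕜}
    (hA : ∀ b, (A b).PosSemidef) (hS : HasSum A S) : S.PosSemidef := by
  refine .of_dotProduct_mulVec_nonneg ?_ fun x => ?_
  · refine hS.matrix_conjTranspose.unique ?_
    simpa only [(hA _).isHermitian.eq] using hS
  · have hq : Continuous fun M : Matrix ι ι 𝕜 => star x ⬝ᵥ M *ᵥ x := by fun_prop
    refine (hS.map (AddMonoidHom.mk' (fun M => star x ⬝ᵥ M *ᵥ x) fun M N => ?_) hq).nonneg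
      fun b => (hA b).dotProduct_mulVec_nonneg x
    simp [add_mulVec, dotProduct_add]

theorem posSemidef_of_const_one : (of fun _ _ : ι => (1 : 𝕜)).PosSemidef := by
  simpa [vecMulVec] using posSemidef_vecMulVec_star_self (fun _ : ι => (1 : 𝕜))

theorem PosSemidef.hadamard_pow {A : Matrix ι ι 𝕜} (hA : A.PosSemidef) (m : ℕ) :
    (of fun i j => A i j ^ m).PosSemidef := by
  induction m with
  | zero => simpa only [pow_zero] using posSemidef_of_const_one
  | succ m ih =>
    convert ih.hadamard hA using 1
    ext i j
    simp [pow_succ]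

theorem PosSemidef.of_one_sub_div_one_sub {A B : Matrix ι ι 𝕜} (hA : A.PosSemidef)
    (hAB : (A - B).PosSemidef) (hA_lt : ∀ i j, ‖A i j‖ < 1) :
    (of fun i j => (1 - B i j) / (1 - A i j)).PosSemidef := by
  have hsum : HasSum (fun m => (A - B) ⊙ of fun i j => A i j ^ m)
      (of fun i j => (A i j - B i j) * (1 - A i j)⁻¹) :=
    Pi.hasSum.2 fun i => Pi.hasSum.2 fun j =>
      (hasSum_geometric_of_norm_lt_one (hA_lt i j)).mul_left (A i j - B i j)
  have hsplit : (of fun i j => (1 - B i j) / (1 - A i j))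
      = of (fun _ _ => 1) + of fun i j => (A i j - B i j) * (1 - A i j)⁻¹ := by
    ext i j
    have : 1 - A i j ≠ 0 := sub_ne_zero.2 fun h => by simpa [← h] using hA_lt i j
    simp only [of_apply, add_apply]
    field_simp
    ring
  rw [hsplit]
  exact posSemidef_of_const_one.add (.of_hasSum (fun m => hAB.hadamard (hA.hadamard_pow m)) hsum)

theorem PosSemidef.sum_mul_conj_mul_apply_nonneg {K : Matrix ι ι 𝕜} (hK : K.PosSemidef)
    (c : ι → 𝕜) : 0 ≤ ∑ i, ∑ j, c i * conj (c j) * K j i := by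
  convert hK.dotProduct_mulVec_nonneg c using 1
  simp only [dotProduct, mulVec, Finset.mul_sum, Pi.star_apply, RCLike.star_def]
  rw [Finset.sum_comm]
  exact Finset.sum_congr rfl fun _ _ => Finset.sum_congr rfl fun _ _ => by ring

theorem posSemidef_gram_sub_gram_apply_zero {n : ℕ} (v : ι → EuclideanSpace 𝕜 (Fin (n + 1))) :
    (gram 𝕜 v - gram 𝕜 fun i => v i 0).PosSemidef := by
  have hv : gram 𝕜 v = ∑ k, gram 𝕜 fun i => v i k := by
    ext i j
    simp [PiLp.inner_apply, Matrix.sum_apply]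
  rw [hv, Fin.sum_univ_succ, add_sub_cancel_left]
  exact posSemidef_sum _ fun k _ => posSemidef_gram 𝕜 _

end Matrix

theorem norm_inner_lt_one {𝕜 E : Type*} [RCLike 𝕜] [SeminormedAddCommGroup E]
    [InnerProductSpace 𝕜 E] {x y : E} (hx : ‖x‖ < 1) (hy : ‖y‖ < 1) : ‖inner 𝕜 x y‖ < 1 :=
  (norm_inner_le_norm x y).trans_lt (mul_lt_one_of_nonneg_of_lt_one_left (norm_nonneg x) hx hy.le)

section Quotient

variable {ι : Type*} [Fintype ι]

noncomputable def coordQuotient (i : ι) (z : EuclideanSpace ℂ ι) : ℝ :=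
  (1 - ‖z i‖ ^ 2) / (1 - ‖z‖ ^ 2)

theorem one_le_coordQuotient (i : ι) {z : EuclideanSpace ℂ ι} (hz : ‖z‖ < 1) :
    1 ≤ coordQuotient i z := by
  have hzi : ‖z i‖ ≤ ‖z‖ := PiLp.norm_apply_le z i
  rw [coordQuotient, one_le_div (by nlinarith [norm_nonneg z])]
  nlinarith [norm_nonneg (z i)]

end Quotient

section Points

variable {ι : Type*} [DecidableEq ι] {i j : ι} {r : ℝ}

noncomputable def radialPoint (i : ι) (r : ℝ) : EuclideanSpace ℂ ι :=
  (r : ℂ) • EuclideanSpace.single i 1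

noncomputable def tiltedPoint (i j : ι) (r : ℝ) : EuclideanSpace ℂ ι :=
  (r : ℂ) • EuclideanSpace.single i 1 + (√((1 - r ^ 2) / 2) : ℂ) • EuclideanSpace.single j 1

theorem radialPoint_apply_self : radialPoint i r i = r := by
  simp [radialPoint]

theorem tiltedPoint_apply_self (hij : i ≠ j) : tiltedPoint i j r i = r := by
  simp [tiltedPoint, hij]

variable [Fintype ι]

theorem norm_radialPoint : ‖radialPoint i r‖ = |r| := by
  simp [radialPoint, norm_smul, PiLp.norm_single]

theorem norm_tiltedPoint_sq (hij : i ≠ j) (hr : |r| ≤ 1) :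
    ‖tiltedPoint i j r‖ ^ 2 = (1 + r ^ 2) / 2 := by
  have horth : ⟪(r : ℂ) • EuclideanSpace.single i (1 : ℂ),
      (√((1 - r ^ 2) / 2) : ℂ) • EuclideanSpace.single j (1 : ℂ)⟫ = 0 := by
    simp [EuclideanSpace.inner_single_left, hij]
  rw [tiltedPoint, sq, norm_add_sq_eq_norm_sq_add_norm_sq_of_inner_eq_zero _ _ horth,
    ← sq, ← sq, norm_smul, norm_smul, PiLp.norm_single, PiLp.norm_single, Complex.norm_real,
    Complex.norm_real, norm_one, mul_one, mul_one, Real.norm_eq_abs, Real.norm_eq_abs, sq_abs,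
    sq_abs, Real.sq_sqrt]
  · ring
  · linarith [(sq_le_one_iff_abs_le_one r).2 hr]

theorem coordQuotient_radialPoint (hr : |r| < 1) : coordQuotient i (radialPoint i r) = 1 := by
  rw [coordQuotient, radialPoint_apply_self, norm_radialPoint, Complex.norm_real,
    Real.norm_eq_abs, sq_abs]
  exact div_self (by linarith [(sq_lt_one_iff_abs_lt_one r).2 hr])

theorem coordQuotient_tiltedPoint (hij : i ≠ j) (hr : |r| < 1) :
    coordQuotient i (tiltedPoint i j r) = 2 := by
  rw [coordQuotient, tiltedPoint_apply_self hij, norm_tiltedPoint_sq hij hr.le,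
    Complex.norm_real, Real.norm_eq_abs, sq_abs,
    div_eq_iff (by linarith [(sq_lt_one_iff_abs_lt_one r).2 hr])]
  ring

theorem tendsto_radialPoint (i : ι) :
    Tendsto (radialPoint i) (𝓝 1) (𝓝 (EuclideanSpace.single i 1)) := by
  have h : Continuous (radialPoint i) := by unfold radialPoint; fun_prop
  simpa [radialPoint] using h.tendsto 1

theorem tendsto_tiltedPoint (i j : ι) :
    Tendsto (tiltedPoint i j) (𝓝 1) (𝓝 (EuclideanSpace.single i 1)) := by
  have h : Continuous (tiltedPoint i j) := by unfold tiltedPoint; fun_prop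
  simpa [tiltedPoint] using h.tendsto 1

theorem liminf_coordQuotient (i : ι) :
    liminf (coordQuotient i) (𝓝[ball 0 1] (EuclideanSpace.single i 1)) = 1 := by
  have h_ge : ∀ᶠ z in 𝓝[ball 0 1] (EuclideanSpace.single i 1), 1 ≤ coordQuotient i z :=
    eventually_nhdsWithin_of_forall fun z hz => one_le_coordQuotient i (mem_ball_zero_iff.1 hz)
  have h_unit : ∀ᶠ r in 𝓝[<] (1 : ℝ), |r| < 1 :=
    mem_of_superset (Ioo_mem_nhdsLT (neg_one_lt_zero.trans one_pos)) fun r hr => abs_lt.2 hr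
  have h_radial : Tendsto (radialPoint i) (𝓝[<] 1) (𝓝[ball 0 1] (EuclideanSpace.single i 1)) :=
    tendsto_nhdsWithin_iff.2 ⟨(tendsto_radialPoint i).mono_left nhdsWithin_le_nhds,
      h_unit.mono fun r hr => by rwa [mem_ball_zero_iff, norm_radialPoint]⟩
  have h_le : ∃ᶠ z in 𝓝[ball 0 1] (EuclideanSpace.single i 1), coordQuotient i z ≤ 1 :=
    h_radial.frequently (h_unit.mono fun r hr => (coordQuotient_radialPoint hr).le).frequently
  exact le_antisymm (liminf_le_of_frequently_le h_le (isBoundedUnder_of_eventually_ge h_ge))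
    (le_liminf_of_le (IsCoboundedUnder.of_frequently_le h_le) h_ge)

end Points

section Koranyi

variable {m : ℕ} {i j : Fin m} {r : ℝ}

theorem mem_koranyi_single_iff {α : ℝ} {z : EuclideanSpace ℂ (Fin m)} :
    z ∈ Koranyi α (EuclideanSpace.single i 1) ↔
      ‖z‖ < 1 ∧ ‖1 - z i‖ ≤ α / 2 * (1 - ‖z‖ ^ 2) := by
  simp [Koranyi, EuclideanSpace.inner_single_left]

theorem radialPoint_mem_koranyi (hr : r ∈ Set.Ico 0 1) :
    radialPoint i r ∈ Koranyi 4 (EuclideanSpace.single i 1) := by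
  obtain ⟨hr0, hr1⟩ := hr
  rw [mem_koranyi_single_iff, norm_radialPoint, radialPoint_apply_self, abs_of_nonneg hr0,
    ← Complex.ofReal_one, ← Complex.ofReal_sub, Complex.norm_real, Real.norm_eq_abs,
    abs_of_nonneg (sub_nonneg.2 hr1.le)]
  exact ⟨hr1, by nlinarith⟩

theorem tiltedPoint_mem_koranyi (hij : i ≠ j) (hr : r ∈ Set.Ico 0 1) :
    tiltedPoint i j r ∈ Koranyi 4 (EuclideanSpace.single i 1) := by
  obtain ⟨hr0, hr1⟩ := hr
  have hnorm := norm_tiltedPoint_sq hij (r := r) (by rw [abs_of_nonneg hr0]; exact hr1.le)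
  rw [mem_koranyi_single_iff, hnorm, tiltedPoint_apply_self hij,
    ← Complex.ofReal_one, ← Complex.ofReal_sub, Complex.norm_real, Real.norm_eq_abs,
    abs_of_nonneg (sub_nonneg.2 hr1.le)]
  refine ⟨?_, by nlinarith⟩
  nlinarith [norm_nonneg (tiltedPoint i j r)]

end Koranyi

/-- For `φ(z) = z₁ : Bⁿ → 𝔻` (with `n ≥ 2`): `φ` is in the Schur–Agler
class `S(n,1)` (the kernel `(1 - z₁ conj w₁)/(1-⟨z,w⟩)` is positive semidefinite),
satisfies condition (C) at `e₁` with `L = liminf = 1`, but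
`(1-|z₁|²)/(1-‖z‖²)` has no K-limit at `e₁`: there exist two sequences in some
Koranyi region `D_α(e₁)` converging to `e₁` along which it converges to different
limits. -/
theorem coordinate_map_no_K_limit (n : ℕ) :
    (∀ (N : ℕ) (zs : Fin N → EuclideanSpace ℂ (Fin (n + 2))),
      (∀ i, zs i ∈ ball (0 : EuclideanSpace ℂ (Fin (n + 2))) 1) →
      ∀ c : Fin N → ℂ,
        0 ≤ ∑ i, ∑ j, c i * conj (c j) *
          ((1 - (zs i 0 : ℂ) * conj (zs j 0 : ℂ)) / (1 - ⟪zs j, zs i⟫))) ∧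
    (Filter.liminf
      (fun z : EuclideanSpace ℂ (Fin (n + 2)) =>
        (1 - ‖z 0‖ ^ 2) / (1 - ‖z‖ ^ 2))
      (𝓝[ball (0 : EuclideanSpace ℂ (Fin (n + 2))) 1]
        (EuclideanSpace.single (0 : Fin (n + 2)) (1 : ℂ))) = 1) ∧
    (∃ α > (0 : ℝ), ∃ u v : ℕ → EuclideanSpace ℂ (Fin (n + 2)),
      (∀ j, u j ∈ Koranyi α (EuclideanSpace.single (0 : Fin (n + 2)) (1 : ℂ))) ∧
      (∀ j, v j ∈ Koranyi α (EuclideanSpace.single (0 : Fin (n + 2)) (1 : ℂ))) ∧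
      Tendsto u atTop (𝓝 (EuclideanSpace.single (0 : Fin (n + 2)) (1 : ℂ))) ∧
      Tendsto v atTop (𝓝 (EuclideanSpace.single (0 : Fin (n + 2)) (1 : ℂ))) ∧
      ∃ L₁ L₂ : ℝ, L₁ ≠ L₂ ∧
        Tendsto (fun j => (1 - ‖u j 0‖ ^ 2) / (1 - ‖u j‖ ^ 2))
          atTop (𝓝 L₁) ∧
        Tendsto (fun j => (1 - ‖v j 0‖ ^ 2) / (1 - ‖v j‖ ^ 2))
          atTop (𝓝 L₂)) := by
  have h01 : (0 : Fin (n + 2)) ≠ 1 := Fin.zero_ne_one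
  obtain ⟨r, -, hr, hr_lim⟩ := exists_seq_strictMono_tendsto' (zero_lt_one' ℝ)
  have hr_abs k : |r k| < 1 := abs_lt.2 ⟨by linarith [(hr k).1], (hr k).2⟩
  refine ⟨fun N zs hz c => ?_, liminf_coordQuotient 0, 4, by norm_num,
    fun k => radialPoint 0 (r k), fun k => tiltedPoint 0 1 (r k),
    fun k => radialPoint_mem_koranyi (Set.Ioo_subset_Ico_self (hr k)),
    fun k => tiltedPoint_mem_koranyi h01 (Set.Ioo_subset_Ico_self (hr k)),
    (tendsto_radialPoint 0).comp hr_lim, (tendsto_tiltedPoint 0 1).comp hr_lim, 1, 2, by norm_num,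
    tendsto_const_nhds.congr fun k => (coordQuotient_radialPoint (hr_abs k)).symm,
    tendsto_const_nhds.congr fun k => (coordQuotient_tiltedPoint h01 (hr_abs k)).symm⟩
  have hK := (Matrix.posSemidef_gram ℂ zs).of_one_sub_div_one_sub
    (Matrix.posSemidef_gram_sub_gram_apply_zero zs)
    fun i j => norm_inner_lt_one (mem_ball_zero_iff.1 (hz i)) (mem_ball_zero_iff.1 (hz j))
  simpa [mul_comm] using hK.sum_mul_conj_mul_apply_nonneg c
end
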